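/- The profile tree T of an NBW A on an infinite word w has only finitely many infinite branches. -/

import Mathlib

/-!
Profile trees for Büchi determinization (Fisman–Kupferman–Vardi–Wilke style profiles).
Common definitions: nondeterministic Büchi word automata (NBW), the run DAG `G`,
profiles of nodes, and the pruned run DAG `G'`.
-/

/-- A nondeterministic Büchi word automaton `A = (Alph, Q, Qin, ρ, F)` with `Qin ∩ F = ∅`. -/
structure NBW (Alph Q : Type*) where
  Qin : Set Q
  ρ : Q → Alph → Set Q
  F : Set Q
  disj : Qin ∩ F = ∅

variable {Alph Q : Type*} (A : NBW Alph Q) (w : ℕ → Alph)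

/-- Lexicographic order `L₁ ≤ L₂` on profiles (lists over ℕ). -/
def lexLE (L₁ L₂ : List ℕ) : Prop :=
  List.Lex (· < ·) L₁ L₂ ∨ L₁ = L₂

/-- Strict lexicographic order `L₁ < L₂` on profiles. -/
def lexLT (L₁ L₂ : List ℕ) : Prop :=
  List.Lex (· < ·) L₁ L₂

open Classical in
/-- The profiles of all finite initial runs of `A` (on `w`) to the node `v = (q, i)`:
for each run `p₀,…,p_i` with `p₀ ∈ Qin`, `p_{j+1} ∈ ρ(p_j, w_j)` and `p_i = q`, the
sequence of `F`-visitation labels `f(p₀,0) ⋯ f(p_i,i)` (where `f` is 1 on `F`-nodes, else 0). -/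
def runProfiles (v : Q × ℕ) : Set (List ℕ) :=
  { L | ∃ p : ℕ → Q, p 0 ∈ A.Qin ∧ (∀ j < v.2, p (j + 1) ∈ A.ρ (p j) (w j)) ∧
        p v.2 = v.1 ∧ L = (List.range (v.2 + 1)).map (fun j => if p j ∈ A.F then 1 else 0) }

/-- `v` is a node of the run DAG `G = (V, E)` (equivalently of the pruned DAG `G'`):
there is a finite run of `A` to `v.1` on `w₀ ⋯ w_{v.2 - 1}`. -/
def memV (v : Q × ℕ) : Prop := (runProfiles A w v).Nonempty

/-- `L` is the lexicographically maximal profile among all initial paths to `v`. -/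
def IsMaxProfile (v : Q × ℕ) (L : List ℕ) : Prop :=
  L ∈ runProfiles A w v ∧ ∀ L' ∈ runProfiles A w v, lexLE L' L

open Classical in
/-- The profile `h_v` of a node `v`: the lexicographically maximal profile of an
initial path to `v` (junk value `[]` if `v` is not a node of the DAG). -/
noncomputable def profile (v : Q × ℕ) : List ℕ :=
  if h : ∃ L, IsMaxProfile A w v L then h.choose else []

/-- The edge relation `E` of the run DAG `G`: `E((q,i), (q',i+1))` iff `(q,i) ∈ V`
and `q' ∈ ρ(q, w_i)`. -/
def edgeG (u v : Q × ℕ) : Prop :=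
  memV A w u ∧ v.2 = u.2 + 1 ∧ v.1 ∈ A.ρ u.1 (w u.2)

/-- The edge relation `E'` of the pruned run DAG `G'`: `(u,v) ∈ E` and every
`E`-parent `u'` of `v` satisfies `h_{u'} ≤ h_u`. -/
def edgeG' (u v : Q × ℕ) : Prop :=
  edgeG A w u v ∧ ∀ u', edgeG A w u' v → lexLE (profile A w u') (profile A w u)

/-- The equivalence class (under equality of profiles, levelwise) of a node `u` of `G'`. -/
def classOf (u : Q × ℕ) : Set (Q × ℕ) :=
  { v | memV A w v ∧ v.2 = u.2 ∧ profile A w v = profile A w u }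

/-- `C` is a class (node) of the profile tree `T` on level `i`. -/
def ClassAt (C : Set (Q × ℕ)) (i : ℕ) : Prop :=
  ∃ u, memV A w u ∧ u.2 = i ∧ C = classOf A w u

/-- The child relation of the profile tree `T`: `[v]` is a child of `[u]`
whenever `(u, v) ∈ E'`. -/
def childC (C D : Set (Q × ℕ)) : Prop :=
  ∃ u v, edgeG' A w u v ∧ memV A w v ∧ C = classOf A w u ∧ D = classOf A w v

/-- `D` is a descendant of `C` in `T`: there is a (possibly empty) path from `C` to `D`. -/
def DescC : Set (Q × ℕ) → Set (Q × ℕ) → Prop := Relation.ReflTransGen (childC A w)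

/-- `C` is an `F`-class: all its members are `F`-nodes. -/
def IsFClass (C : Set (Q × ℕ)) : Prop := ∀ v ∈ C, v.1 ∈ A.F

/-- `h_C ≤ h_D` for classes `C`, `D` (members of a class all share one profile). -/
def profLE (C D : Set (Q × ℕ)) : Prop :=
  ∀ u ∈ C, ∀ v ∈ D, lexLE (profile A w u) (profile A w v)

/-- `h_C < h_D` for classes `C`, `D`. -/
def profLT (C D : Set (Q × ℕ)) : Prop :=
  ∀ u ∈ C, ∀ v ∈ D, lexLT (profile A w u) (profile A w v)

/-- An infinite branch of `T`: a class on each level, consecutive ones related by the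
child relation. -/
def IsBranch (b : ℕ → Set (Q × ℕ)) : Prop :=
  (∀ i, ClassAt A w (b i) i) ∧ ∀ i, childC A w (b i) (b (i + 1))

/-!
Along an edge `u → v` of the pruned DAG the profile of `v` is `h_u` followed by `f(v)`, so in the
profile tree a class has at most one parent, and two branches that differ at some level differ at
every later level. Given `k` distinct infinite branches, at a level beyond all their pairwise
divergence points they occupy `k` distinct, hence disjoint and nonempty, classes of nodes of that
level, so `k ≤ |Q|`.
-/

open Filter

open Classical in
noncomputable def fLabel (v : Q × ℕ) : ℕ := if v.1 ∈ A.F then 1 else 0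

lemma lexLE_iff_le {L₁ L₂ : List ℕ} : lexLE L₁ L₂ ↔ L₁ ≤ L₂ := by
  rw [le_iff_lt_or_eq]; rfl

lemma List.Lex.append_of_length_eq {α : Type*} {r : α → α → Prop} {L₁ L₂ : List α}
    (M₁ M₂ : List α) (hlen : L₁.length = L₂.length) (h : List.Lex r L₁ L₂) :
    List.Lex r (L₁ ++ M₁) (L₂ ++ M₂) := by
  induction h with
  | nil => simp at hlen
  | cons _ ih => exact List.Lex.cons (ih (by simpa using hlen))
  | rel h => exact List.Lex.rel h

lemma List.append_le_append_of_length_eq {α : Type*} [LinearOrder α] {L₁ L₂ : List α}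
    (M : List α) (hlen : L₁.length = L₂.length) (h : L₁ ≤ L₂) :
    L₁ ++ M ≤ L₂ ++ M := by
  rcases h.lt_or_eq with h | rfl
  · exact le_of_lt (List.Lex.append_of_length_eq M M hlen h)
  · rfl

lemma runProfiles_finite (v : Q × ℕ) : (runProfiles A w v).Finite := by
  classical
  refine (Set.finite_range fun g : Fin (v.2 + 1) → Bool => (List.range (v.2 + 1)).map
    fun j => if h : j < v.2 + 1 then (if g ⟨j, h⟩ then 1 else 0) else 0).subset ?_
  rintro L ⟨p, -, -, -, rfl⟩
  refine ⟨fun k => decide (p k.1 ∈ A.F), List.map_congr_left fun j hj => ?_⟩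
  simp [List.mem_range.mp hj]

variable {A w}

lemma length_of_mem_runProfiles {v : Q × ℕ} {L : List ℕ} (h : L ∈ runProfiles A w v) :
    L.length = v.2 + 1 := by
  obtain ⟨p, -, -, -, rfl⟩ := h
  simp

lemma exists_isMaxProfile {v : Q × ℕ} (hv : memV A w v) : ∃ L, IsMaxProfile A w v L := by
  obtain ⟨L, hL, hmax⟩ := Set.exists_max_image _ id (runProfiles_finite A w v) hv
  exact ⟨L, hL, fun L' hL' => lexLE_iff_le.mpr (hmax L' hL')⟩

lemma isMaxProfile_profile {v : Q × ℕ} (hv : memV A w v) :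
    IsMaxProfile A w v (profile A w v) := by
  have h := exists_isMaxProfile hv
  rw [profile, dif_pos h]
  exact h.choose_spec

lemma profile_mem_runProfiles {v : Q × ℕ} (hv : memV A w v) :
    profile A w v ∈ runProfiles A w v :=
  (isMaxProfile_profile hv).1

lemma le_profile {v : Q × ℕ} (hv : memV A w v) {L : List ℕ} (hL : L ∈ runProfiles A w v) :
    L ≤ profile A w v :=
  lexLE_iff_le.mp ((isMaxProfile_profile hv).2 L hL)

lemma length_profile {v : Q × ℕ} (hv : memV A w v) : (profile A w v).length = v.2 + 1 :=
  length_of_mem_runProfiles (profile_mem_runProfiles hv)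

lemma append_mem_runProfiles_of_edgeG {u v : Q × ℕ} {L : List ℕ} (huv : edgeG A w u v)
    (hL : L ∈ runProfiles A w u) : L ++ [fLabel A v] ∈ runProfiles A w v := by
  classical
  obtain ⟨p, hp0, hstep, hpu, rfl⟩ := hL
  obtain ⟨-, hv2, hρ⟩ := huv
  have hlast : ¬ u.2 + 1 ≤ u.2 := by omega
  refine ⟨fun j => if j ≤ u.2 then p j else v.1, by simpa using hp0, ?_, ?_, ?_⟩
  · intro j hj
    rcases (Nat.lt_succ_iff.mp (hv2 ▸ hj)).lt_or_eq with hj | rfl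
    · simpa [hj.le, Nat.succ_le_of_lt hj] using hstep j hj
    · simpa [hlast, hpu] using hρ
  · simp [hv2]
  · rw [hv2, List.range_succ (n := u.2 + 1), List.map_append]
    congr 1
    · exact List.map_congr_left fun j hj => by simp [Nat.lt_succ_iff.mp (List.mem_range.mp hj)]
    · simp [hlast, fLabel]

lemma memV_of_edgeG {u v : Q × ℕ} (huv : edgeG A w u v) : memV A w v :=
  ⟨_, append_mem_runProfiles_of_edgeG huv (profile_mem_runProfiles huv.1)⟩

lemma exists_edgeG_of_mem_runProfiles {v : Q × ℕ} {i : ℕ} {L : List ℕ} (hv2 : v.2 = i + 1)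
    (hL : L ∈ runProfiles A w v) :
    ∃ u L', edgeG A w u v ∧ L' ∈ runProfiles A w u ∧ L = L' ++ [fLabel A v] := by
  classical
  obtain ⟨p, hp0, hstep, hpv, rfl⟩ := hL
  have hL' : (List.range (i + 1)).map (fun j => if p j ∈ A.F then 1 else 0)
      ∈ runProfiles A w (p i, i) := ⟨p, hp0, fun j hj => hstep j (by omega), rfl, rfl⟩
  have hpi : p (i + 1) = v.1 := by rw [← hv2, hpv]
  refine ⟨(p i, i), _, ⟨⟨_, hL'⟩, hv2, ?_⟩, hL', ?_⟩
  · simpa [hpi] using hstep i (by omega)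
  · rw [hv2, List.range_succ (n := i + 1), List.map_append]
    simp [hpi, fLabel]

/-- Every run to `v` passes through some `E`-parent `u'` of `v`, whose profile is at most `h_u`
by the pruning condition; so no run to `v` beats the extension of `h_u`. -/
lemma profile_of_edgeG' {u v : Q × ℕ} (h : edgeG' A w u v) :
    profile A w v = profile A w u ++ [fLabel A v] := by
  obtain ⟨huv, hmax⟩ := h
  have hu := huv.1
  have hv := memV_of_edgeG huv
  obtain ⟨u', L', hu'v, hL', hdec⟩ :=
    exists_edgeG_of_mem_runProfiles huv.2.1 (profile_mem_runProfiles hv)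
  have hlen : L'.length = (profile A w u).length := by
    rw [length_of_mem_runProfiles hL', length_profile hu]
    have := hu'v.2.1
    have := huv.2.1
    omega
  refine le_antisymm ?_ (le_profile hv (append_mem_runProfiles_of_edgeG huv
    (profile_mem_runProfiles hu)))
  rw [hdec]
  exact List.append_le_append_of_length_eq _ hlen
    ((le_profile hu'v.1 hL').trans (lexLE_iff_le.mp (hmax u' hu'v)))

lemma mem_classOf_self {u : Q × ℕ} (hu : memV A w u) : u ∈ classOf A w u := ⟨hu, rfl, rfl⟩

lemma classOf_eq_classOf {u u' : Q × ℕ} (h₁ : u.2 = u'.2)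
    (h₂ : profile A w u = profile A w u') : classOf A w u = classOf A w u' := by
  ext x
  simp only [classOf, Set.mem_ofPred_eq, h₁, h₂]

lemma leftUnique_childC : Relator.LeftUnique (childC A w) := by
  rintro _ _ D ⟨u, v, he, hv, rfl, rfl⟩ ⟨u', v', he', -, rfl, hD⟩
  obtain ⟨-, hlevel, hprof⟩ : v ∈ classOf A w v' := hD ▸ mem_classOf_self hv
  have happ : profile A w u ++ [fLabel A v] = profile A w u' ++ [fLabel A v'] := by
    rw [← profile_of_edgeG' he, ← profile_of_edgeG' he', hprof]
  refine classOf_eq_classOf ?_ (List.append_inj' happ rfl).1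
  have := he.1.2.1
  have := he'.1.2.1
  omega

lemma ClassAt.eq_of_mem {C D : Set (Q × ℕ)} {i : ℕ} (hC : ClassAt A w C i)
    (hD : ClassAt A w D i) {x : Q × ℕ} (hxC : x ∈ C) (hxD : x ∈ D) : C = D := by
  obtain ⟨u, -, rfl, rfl⟩ := hC
  obtain ⟨v, -, hv, rfl⟩ := hD
  obtain ⟨-, hxu, hpu⟩ := hxC
  obtain ⟨-, hxv, hpv⟩ := hxD
  exact classOf_eq_classOf (by rw [← hxu, hxv, hv]) (hpu.symm.trans hpv)

lemma ClassAt.exists_mem {C : Set (Q × ℕ)} {i : ℕ} (hC : ClassAt A w C i) :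
    ∃ q, (q, i) ∈ C := by
  obtain ⟨u, hu, rfl, rfl⟩ := hC
  exact ⟨u.1, mem_classOf_self hu⟩

lemma card_le_of_forall_classAt [Fintype Q] {s : Finset (Set (Q × ℕ))} {i : ℕ}
    (hs : ∀ C ∈ s, ClassAt A w C i) : s.card ≤ Fintype.card Q := by
  refine Finset.card_le_card_of_forall_subsingleton (fun C q => (q, i) ∈ C)
    (fun C hC => ((hs C hC).exists_mem).imp fun q hq => ⟨Finset.mem_univ q, hq⟩) ?_
  rintro q - C ⟨hC, hqC⟩ D ⟨hD, hqD⟩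
  exact (hs C hC).eq_of_mem (hs D hD) hqC hqD

lemma IsBranch.ne_of_le {b b' : ℕ → Set (Q × ℕ)} (hb : IsBranch A w b)
    (hb' : IsBranch A w b') {i j : ℕ} (hij : i ≤ j) (h : b i ≠ b' i) : b j ≠ b' j := by
  induction j, hij using Nat.le_induction with
  | base => exact h
  | succ n _ ih => exact fun heq => ih (leftUnique_childC (hb.2 n) (heq ▸ hb'.2 n))

lemma IsBranch.eventually_ne {b b' : ℕ → Set (Q × ℕ)} (hb : IsBranch A w b)
    (hb' : IsBranch A w b') (h : b ≠ b') : ∀ᶠ j in atTop, b j ≠ b' j := by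
  obtain ⟨i, hi⟩ := Function.ne_iff.mp h
  exact eventually_atTop.mpr ⟨i, fun _ hij => hb.ne_of_le hb' hij hi⟩

lemma card_le_of_forall_isBranch [Fintype Q] {t : Finset (ℕ → Set (Q × ℕ))}
    (ht : ∀ b ∈ t, IsBranch A w b) : t.card ≤ Fintype.card Q := by
  classical
  have hdiverge : ∀ p ∈ t.offDiag, ∀ᶠ N in atTop, p.1 N ≠ p.2 N := fun p hp =>
    have ⟨hp₁, hp₂, hne⟩ := Finset.mem_offDiag.mp hp
    (ht _ hp₁).eventually_ne (ht _ hp₂) hne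
  obtain ⟨N, hN⟩ := (t.offDiag.eventually_all.mpr hdiverge).exists
  rw [← Finset.card_image_of_injOn (f := fun b => b N) fun b hb b' hb' hbb' =>
    not_not.mp fun hne => hN (b, b') (Finset.mem_offDiag.mpr ⟨hb, hb', hne⟩) hbb']
  exact card_le_of_forall_classAt fun C hC => by
    obtain ⟨b, hb, rfl⟩ := Finset.mem_image.mp hC
    exact (ht b hb).1 N

theorem finitely_many_infinite_branches_general [Fintype Q]
    (A : NBW Alph Q) (w : ℕ → Alph) :
    { b : ℕ → Set (Q × ℕ) | IsBranch A w b }.Finite := by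
  by_contra hinf
  obtain ⟨t, hts, htcard⟩ := Set.Infinite.exists_subset_card_eq hinf (Fintype.card Q + 1)
  have := card_le_of_forall_isBranch (A := A) (w := w) fun b hb => hts hb
  omega

/-- Corollary: the profile tree has finitely many infinite branches. -/
theorem finitely_many_infinite_branches [Fintype Alph] [Fintype Q]
    (A : NBW Alph Q) (w : ℕ → Alph) :
    { b : ℕ → Set (Q × ℕ) | IsBranch A w b }.Finite :=
  finitely_many_infinite_branches_general A w
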